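/- Let G and G′ be graphs with adjacency matrices A and A′ such that there is a weak isomorphism φ : [G] → [G′] with φ(A) = A′. Then for every t ∈ ℝ, the matrices e^{-itA} and e^{-itA′} have the same multiset of entry values: for each complex value z, the number of pairs (u,v) with (e^{-itA})_{uv} = z equals the number of pairs (u′,v′) with (e^{-itA′})_{u′v′} = z. -/

import Mathlib

open Matrix

/-- The all-ones matrix `J`. -/
def allOnes (V : Type*) : Matrix V V ℂ := Matrix.of fun _ _ => (1 : ℂ)

/-- A cellular algebra: a subalgebra of `Matrix V V ℂ` (hence containing `I`) that is
closed under Hadamard (entrywise) product and conjugate transpose, and contains the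
all-ones matrix `J`. -/
def IsCellular {V : Type*} [Fintype V] [DecidableEq V]
    (W : Subalgebra ℂ (Matrix V V ℂ)) : Prop :=
  (∀ A ∈ W, ∀ B ∈ W, A ⊙ B ∈ W) ∧ (∀ A ∈ W, Aᴴ ∈ W) ∧ allOnes V ∈ W

/-- A 0-1 matrix. -/
def Is01 {V : Type*} (M : Matrix V V ℂ) : Prop := ∀ u v, M u v = 0 ∨ M u v = 1

/-- `R` is a basis of `W` consisting of 0-1 matrices, whose sum is the all-ones matrix. -/
def IsStdBasis {V : Type*} [Fintype V] [DecidableEq V]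
    (W : Subalgebra ℂ (Matrix V V ℂ)) (R : Finset (Matrix V V ℂ)) : Prop :=
  (∀ M ∈ R, Is01 M) ∧ (↑R ⊆ (W : Set (Matrix V V ℂ))) ∧
    LinearIndependent ℂ ((↑) : (↑R : Set (Matrix V V ℂ)) → Matrix V V ℂ) ∧
    Submodule.span ℂ (↑R : Set (Matrix V V ℂ)) = Subalgebra.toSubmodule W ∧
    ∑ M ∈ R, M = allOnes V


/-- A weak isomorphism between cellular algebras: a bijection from `W` onto `W′`
preserving addition, scalar multiplication, matrix multiplication, Hadamard
multiplication and conjugate transposition. -/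
def IsWeakIso {V V2 : Type*} [Fintype V] [DecidableEq V] [Fintype V2] [DecidableEq V2]
    (W : Subalgebra ℂ (Matrix V V ℂ)) (W2 : Subalgebra ℂ (Matrix V2 V2 ℂ))
    (f : Matrix V V ℂ → Matrix V2 V2 ℂ) : Prop :=
  Set.BijOn f (W : Set (Matrix V V ℂ)) (W2 : Set (Matrix V2 V2 ℂ)) ∧
  (∀ A ∈ W, ∀ B ∈ W, f (A + B) = f A + f B) ∧
  (∀ (c : ℂ), ∀ A ∈ W, f (c • A) = c • f A) ∧
  (∀ A ∈ W, ∀ B ∈ W, f (A * B) = f A * f B) ∧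
  (∀ A ∈ W, ∀ B ∈ W, f (A ⊙ B) = f A ⊙ f B) ∧
  (∀ A ∈ W, f Aᴴ = (f A)ᴴ)

/-!
`e^{-itA}` is a limit of polynomials in `A`, so it lies in the closed, finite-dimensional
algebra `W`, and `f`, being linear (hence continuous) and multiplicative on `W`, sends it to
`e^{-itA′}`. Given a value `z`, apply entrywise the Lagrange polynomial that is `1` at `z` and `0`
at every other entry of the two matrices: this is a combination of Hadamard powers, so it stays
in `W` and commutes with `f`, and it turns both matrices into the 0-1 indicators of their
entries equal to `z`. The number of such entries is the entry sum, which `f` preserves since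
`J X J = (∑ X) • J` and `f J = J`.
-/

section

theorem map_pow_succ {V : Type*} (X : Matrix V V ℂ) (n : ℕ) :
    X.map (· ^ (n + 1)) = X ⊙ X.map (· ^ n) := by
  ext; simp [pow_succ']

theorem map_eval_eq_sum {V : Type*} (p : Polynomial ℂ) (X : Matrix V V ℂ) :
    X.map p.eval = ∑ k ∈ Finset.range (p.natDegree + 1), p.coeff k • X.map (· ^ k) := by
  ext u v
  simp [Polynomial.eval_eq_sum_range, Matrix.sum_apply]

theorem allOnes_mul_mul_allOnes {V : Type*} [Fintype V] (X : Matrix V V ℂ) :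
    allOnes V * X * allOnes V = (∑ q : V × V, X q.1 q.2) • allOnes V := by
  ext u v
  simp only [Matrix.mul_apply, allOnes, Matrix.smul_apply, Matrix.of_apply, smul_eq_mul,
    mul_one, one_mul, Fintype.sum_prod_type]
  rw [Finset.sum_comm]

theorem sum_map_eval_basis_eq_card {V : Type*} [Fintype V] {s : Finset ℂ} {z : ℂ} (hz : z ∈ s)
    {M : Matrix V V ℂ} (hM : ∀ u v, M u v ∈ s) :
    ∑ q : V × V, (Lagrange.basis s id z).eval (M q.1 q.2) =
      Nat.card {q : V × V // M q.1 q.2 = z} := by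
  classical
  have hindicator : ∀ w ∈ s, (Lagrange.basis s id z).eval w = if w = z then 1 else 0 := by
    intro w hw
    split_ifs with hwz
    · subst hwz; exact Lagrange.eval_basis_self (v := id) (Set.injOn_id _) hz
    · exact Lagrange.eval_basis_of_ne (v := id) (Ne.symm hwz) hw
  rw [Finset.sum_congr rfl fun q _ => hindicator _ (hM q.1 q.2), Finset.sum_boole,
    Nat.card_eq_fintype_card, Fintype.card_subtype]

variable {V : Type*} [Fintype V] [DecidableEq V] {W : Subalgebra ℂ (Matrix V V ℂ)}

theorem map_pow_mem (hHad : ∀ A ∈ W, ∀ B ∈ W, A ⊙ B ∈ W) (hJ : allOnes V ∈ W)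
    {X : Matrix V V ℂ} (hX : X ∈ W) (n : ℕ) : X.map (· ^ n) ∈ W := by
  induction n with
  | zero => simpa [allOnes, Matrix.map] using hJ
  | succ n ih =>
    rw [map_pow_succ]
    exact hHad X hX _ ih

theorem map_eval_mem (hHad : ∀ A ∈ W, ∀ B ∈ W, A ⊙ B ∈ W) (hJ : allOnes V ∈ W)
    {X : Matrix V V ℂ} (hX : X ∈ W) (p : Polynomial ℂ) : X.map p.eval ∈ W := by
  rw [map_eval_eq_sum]
  exact Subalgebra.sum_mem _ fun k _ => Subalgebra.smul_mem _ (map_pow_mem hHad hJ hX k) _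

theorem exp_mem_of_mem {X : Matrix V V ℂ} (hX : X ∈ W) : NormedSpace.exp X ∈ W :=
  NormedSpace.exp_mem (R := ℂ) (s := W) (Subalgebra.toSubmodule W).closed_of_finiteDimensional hX

end

namespace IsWeakIso

variable {V V2 : Type*} [Fintype V] [DecidableEq V] [Fintype V2] [DecidableEq V2]
  {W : Subalgebra ℂ (Matrix V V ℂ)} {W2 : Subalgebra ℂ (Matrix V2 V2 ℂ)}
  {f : Matrix V V ℂ → Matrix V2 V2 ℂ}

theorem exists_continuousLinearMap_eq (hf : IsWeakIso W W2 f) :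
    ∃ g : Matrix V V ℂ →L[ℂ] Matrix V2 V2 ℂ, ∀ X ∈ W, g X = f X := by
  obtain ⟨q, hq⟩ := Submodule.exists_isCompl (Subalgebra.toSubmodule W)
  let fW : Subalgebra.toSubmodule W →ₗ[ℂ] Matrix V2 V2 ℂ :=
    { toFun := fun X => f X
      map_add' := fun X Y => hf.2.1 X X.2 Y Y.2
      map_smul' := fun c X => hf.2.2.1 c X X.2 }
  refine ⟨LinearMap.toContinuousLinearMap (fW ∘ₗ (Subalgebra.toSubmodule W).projectionOnto q hq),
    fun X hX => ?_⟩
  have hproj := Submodule.projectionOnto_apply_left hq ⟨X, hX⟩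
  simp_all [fW]

theorem map_one (hf : IsWeakIso W W2 f) : f 1 = 1 := by
  obtain ⟨B, hB, hfB⟩ := hf.1.2.2 W2.one_mem
  simpa [hfB] using (hf.2.2.2.1 1 W.one_mem B hB).symm

theorem map_pow (hf : IsWeakIso W W2 f) {X : Matrix V V ℂ} (hX : X ∈ W) (n : ℕ) :
    f (X ^ n) = f X ^ n := by
  induction n with
  | zero => simpa using hf.map_one
  | succ n ih => rw [pow_succ, hf.2.2.2.1 _ (pow_mem hX n) X hX, ih, pow_succ]

theorem map_allOnes (hf : IsWeakIso W W2 f) (hJ : allOnes V ∈ W) (hJ2 : allOnes V2 ∈ W2) :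
    f (allOnes V) = allOnes V2 := by
  obtain ⟨B, hB, hfB⟩ := hf.1.2.2 hJ2
  have hJB : allOnes V ⊙ B = B := by ext; simp [allOnes]
  have h := hf.2.2.2.2.1 _ hJ B hB
  rw [hJB, hfB] at h
  ext u v
  simpa [allOnes] using congrFun (congrFun h u) v |>.symm

theorem isEmpty_of_isEmpty (hf : IsWeakIso W W2 f) [IsEmpty V2] : IsEmpty V := by
  by_contra hV
  obtain ⟨v⟩ := not_isEmpty_iff.mp hV
  have h01 : (0 : Matrix V V ℂ) = 1 :=
    hf.1.2.1 W.zero_mem W.one_mem (Subsingleton.elim _ _)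
  simpa using congrFun (congrFun h01 v) v

theorem map_exp (hf : IsWeakIso W W2 f) {X : Matrix V V ℂ} (hX : X ∈ W) :
    f (NormedSpace.exp X) = NormedSpace.exp (f X) := by
  let := Matrix.linftyOpNormedRing (α := ℂ) (n := V)
  let := Matrix.linftyOpNormedAlgebra (R := ℂ) (α := ℂ) (n := V)
  let := Matrix.linftyOpNormedRing (α := ℂ) (n := V2)
  let := Matrix.linftyOpNormedAlgebra (R := ℂ) (α := ℂ) (n := V2)
  obtain ⟨g, hg⟩ := hf.exists_continuousLinearMap_eq
  have hseries := (NormedSpace.exp_series_hasSum_exp' (𝕂 := ℂ) X).map g g.continuous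
  have hterm : ∀ n : ℕ, g ((n.factorial⁻¹ : ℂ) • X ^ n) = (n.factorial⁻¹ : ℂ) • f X ^ n := by
    intro n
    rw [g.map_smul, hg _ (pow_mem hX n), hf.map_pow hX n]
  simp only [Function.comp_def, hterm] at hseries
  rw [← hg _ (exp_mem_of_mem hX)]
  exact hseries.unique (NormedSpace.exp_series_hasSum_exp' (𝕂 := ℂ) (f X))

theorem map_map_pow (hf : IsWeakIso W W2 f) (hW : IsCellular W) (hW2 : IsCellular W2)
    {X : Matrix V V ℂ} (hX : X ∈ W) (n : ℕ) : f (X.map (· ^ n)) = (f X).map (· ^ n) := by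
  induction n with
  | zero => simpa [allOnes, Matrix.map] using hf.map_allOnes hW.2.2 hW2.2.2
  | succ n ih =>
    rw [map_pow_succ, hf.2.2.2.2.1 X hX _ (map_pow_mem hW.1 hW.2.2 hX n), ih, map_pow_succ]

theorem map_map_eval (hf : IsWeakIso W W2 f) (hW : IsCellular W) (hW2 : IsCellular W2)
    {X : Matrix V V ℂ} (hX : X ∈ W) (p : Polynomial ℂ) : f (X.map p.eval) = (f X).map p.eval := by
  obtain ⟨g, hg⟩ := hf.exists_continuousLinearMap_eq
  rw [← hg _ (map_eval_mem hW.1 hW.2.2 hX p), map_eval_eq_sum, map_eval_eq_sum, map_sum]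
  refine Finset.sum_congr rfl fun k _ => ?_
  rw [g.map_smul, hg _ (map_pow_mem hW.1 hW.2.2 hX k), hf.map_map_pow hW hW2 hX k]

theorem sum_entries (hf : IsWeakIso W W2 f) (hJ : allOnes V ∈ W) (hJ2 : allOnes V2 ∈ W2)
    {X : Matrix V V ℂ} (hX : X ∈ W) :
    ∑ q : V2 × V2, f X q.1 q.2 = ∑ q : V × V, X q.1 q.2 := by
  cases isEmpty_or_nonempty V2 with
  | inl hV2 =>
    have := hf.isEmpty_of_isEmpty
    simp
  | inr hV2 =>
    obtain ⟨v⟩ := hV2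
    have hfJ := hf.map_allOnes hJ hJ2
    have h := calc
      (∑ q : V2 × V2, f X q.1 q.2) • allOnes V2 = f (allOnes V * X * allOnes V) := by
        rw [hf.2.2.2.1 _ (mul_mem hJ hX) _ hJ, hf.2.2.2.1 _ hJ _ hX, hfJ, allOnes_mul_mul_allOnes]
      _ = (∑ q : V × V, X q.1 q.2) • allOnes V2 := by
        rw [allOnes_mul_mul_allOnes, hf.2.2.1 _ _ hJ, hfJ]
    simpa [allOnes] using congrFun (congrFun h v) v

theorem card_entries_eq (hf : IsWeakIso W W2 f) (hW : IsCellular W) (hW2 : IsCellular W2)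
    {X : Matrix V V ℂ} (hX : X ∈ W) (z : ℂ) :
    Nat.card {q : V × V // X q.1 q.2 = z} = Nat.card {q : V2 × V2 // f X q.1 q.2 = z} := by
  classical
  set s : Finset ℂ := insert z (Finset.univ.image (fun q : V × V => X q.1 q.2) ∪
    Finset.univ.image (fun q : V2 × V2 => f X q.1 q.2))
  set p := Lagrange.basis s id z
  have hXs : ∀ u v, X u v ∈ s := fun u v => by simpa [s] using .inr (.inl ⟨u, v, rfl⟩)
  have hfXs : ∀ u v, f X u v ∈ s := fun u v => by simpa [s] using .inr (.inr ⟨u, v, rfl⟩)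
  have hz : z ∈ s := Finset.mem_insert_self _ _
  have hsum := hf.sum_entries hW.2.2 hW2.2.2 (map_eval_mem hW.1 hW.2.2 hX p)
  rw [hf.map_map_eval hW hW2 hX] at hsum
  simp only [Matrix.map_apply] at hsum
  rw [sum_map_eval_basis_eq_card hz hXs, sum_map_eval_basis_eq_card hz hfXs] at hsum
  exact_mod_cast hsum.symm

end IsWeakIso

theorem stmt_11_general {V V2 : Type*} [Fintype V] [DecidableEq V] [Fintype V2] [DecidableEq V2]
    (G : SimpleGraph V) [DecidableRel G.Adj] (G2 : SimpleGraph V2) [DecidableRel G2.Adj]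
    (W : Subalgebra ℂ (Matrix V V ℂ)) (W2 : Subalgebra ℂ (Matrix V2 V2 ℂ))
    (hW : IsCellular W) (hW2 : IsCellular W2)
    (hA : G.adjMatrix ℂ ∈ W)
    (f : Matrix V V ℂ → Matrix V2 V2 ℂ) (hf : IsWeakIso W W2 f)
    (hfA : f (G.adjMatrix ℂ) = G2.adjMatrix ℂ) (t : ℝ) (z : ℂ) :
    Nat.card {p : V × V //
        NormedSpace.exp ((-Complex.I * t) • G.adjMatrix ℂ) p.1 p.2 = z} =
      Nat.card {p : V2 × V2 //
        NormedSpace.exp ((-Complex.I * t) • G2.adjMatrix ℂ) p.1 p.2 = z} := by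
  have htA : (-Complex.I * t) • G.adjMatrix ℂ ∈ W := Subalgebra.smul_mem W hA _
  have hf_exp : f (NormedSpace.exp ((-Complex.I * t) • G.adjMatrix ℂ)) =
      NormedSpace.exp ((-Complex.I * t) • G2.adjMatrix ℂ) := by
    rw [hf.map_exp htA, hf.2.2.1 _ _ hA, hfA]
  rw [← hf_exp]
  exact hf.card_entries_eq hW hW2 (exp_mem_of_mem htA) z

/-- If `G` and `G′` are equivalent graphs, then for each `t` the matrices `e^{-itA}`
and `e^{-itA′}` have the same multiset of entry values. -/
theorem stmt_11 {V V2 : Type*} [Fintype V] [DecidableEq V] [Fintype V2] [DecidableEq V2]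
    (G : SimpleGraph V) [DecidableRel G.Adj] (G2 : SimpleGraph V2) [DecidableRel G2.Adj]
    (W : Subalgebra ℂ (Matrix V V ℂ)) (W2 : Subalgebra ℂ (Matrix V2 V2 ℂ))
    (hW : IsCellular W) (hW2 : IsCellular W2)
    (hA : G.adjMatrix ℂ ∈ W)
    (hmin : ∀ W' : Subalgebra ℂ (Matrix V V ℂ),
      IsCellular W' → G.adjMatrix ℂ ∈ W' → W ≤ W')
    (hA2 : G2.adjMatrix ℂ ∈ W2)
    (hmin2 : ∀ W' : Subalgebra ℂ (Matrix V2 V2 ℂ),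
      IsCellular W' → G2.adjMatrix ℂ ∈ W' → W2 ≤ W')
    (f : Matrix V V ℂ → Matrix V2 V2 ℂ) (hf : IsWeakIso W W2 f)
    (hfA : f (G.adjMatrix ℂ) = G2.adjMatrix ℂ) (t : ℝ) (z : ℂ) :
    Nat.card {p : V × V //
        NormedSpace.exp ((-Complex.I * t) • G.adjMatrix ℂ) p.1 p.2 = z} =
      Nat.card {p : V2 × V2 //
        NormedSpace.exp ((-Complex.I * t) • G2.adjMatrix ℂ) p.1 p.2 = z} :=
  stmt_11_general G G2 W W2 hW hW2 hA f hf hfA t z
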